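/- arXiv:2208.00152 — 2 statements merged into one kernel-verified Lean document; each statement's English description precedes it below -/
import Mathlib

section
/- Let G be a finite simple graph and v a vertex of G. If the ego subgraph E₂(v) of radius 2 centered at v (the subgraph induced on the disk D₂(v) of vertices reachable from v at distance at most 2) is a tree, then s₂(v) = ŝ(v), where s₂(v) = |{u : d(v,u) = 2}| and ŝ(v) = Σ_{u ∈ N(v)} (deg(u) − 1). -/
/-!
Since `E₂(v)` is acyclic, `v` lies on no triangle and on no 4-cycle of `G`. The first fact makes
every `w ≠ v` adjacent to a neighbour `u` of `v` lie at distance exactly 2, so the circle `C₂(v)`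
is the union of the sets `N(u) \ {v}` over `u ∈ N(v)`; the second makes this union disjoint, and
`|N(u) \ {v}| = deg(u) - 1`.
-/

open Finset

namespace SimpleGraph

variable {V : Type*} {G : SimpleGraph V}

theorem dist_eq_two_iff {u w : V} :
    G.dist u w = 2 ↔ u ≠ w ∧ ¬G.Adj u w ∧ (G.commonNeighbors u w).Nonempty := by
  rw [dist, ENat.toNat_eq_iff two_ne_zero, Nat.cast_ofNat, edist_eq_two_iff]

theorem IsAcyclic.not_adj_of_adj_of_adj (hG : G.IsAcyclic) {a b c : V} (hab : G.Adj a b)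
    (hbc : G.Adj b c) : ¬G.Adj a c := by
  classical
  exact fun hac => hG.cliqueFree le_rfl {a, b, c} (is3Clique_triple_iff.2 ⟨hab, hac, hbc⟩)

theorem IsAcyclic.eq_of_adj_of_adj (hG : G.IsAcyclic) {a b₁ b₂ c : V} (hac : a ≠ c)
    (hab₁ : G.Adj a b₁) (hb₁c : G.Adj b₁ c) (hab₂ : G.Adj a b₂) (hb₂c : G.Adj b₂ c) :
    b₁ = b₂ := by
  have hp₁ : (Walk.cons hab₁ hb₁c.toWalk).IsPath := by
    simp [Walk.cons_isPath_iff, hac, hab₁.ne, hb₁c.ne]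
  have hp₂ : (Walk.cons hab₂ hb₂c.toWalk).IsPath := by
    simp [Walk.cons_isPath_iff, hac, hab₂.ne, hb₂c.ne]
  have := (hG.subsingleton_path a c).elim ⟨_, hp₁⟩ ⟨_, hp₂⟩
  simpa using congrArg (fun p : G.Path a c => p.1.snd) this

theorem card_filter_dist_eq_two [Fintype V] [DecidableEq V] [DecidableRel G.Adj] (v : V)
    (h₃ : ∀ ⦃u w⦄, G.Adj v u → G.Adj u w → ¬G.Adj v w)
    (h₄ : ∀ ⦃u₁ u₂ w⦄, G.Adj v u₁ → G.Adj v u₂ → G.Adj u₁ w → G.Adj u₂ w → v ≠ w → u₁ = u₂) :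
    (univ.filter (fun u => G.dist v u = 2)).card =
      ∑ u ∈ G.neighborFinset v, (G.degree u - 1) := by
  have hcircle : univ.filter (fun u => G.dist v u = 2) =
      (G.neighborFinset v).biUnion fun u => (G.neighborFinset u).erase v := by
    ext w
    simp only [mem_filter, mem_univ, true_and, dist_eq_two_iff, mem_biUnion, mem_erase,
      mem_neighborFinset, Set.Nonempty, mem_commonNeighbors]
    constructor
    · rintro ⟨hvw, -, u, hvu, hwu⟩
      exact ⟨u, hvu, Ne.symm hvw, hwu.symm⟩
    · rintro ⟨u, hvu, hwv, huw⟩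
      exact ⟨Ne.symm hwv, h₃ hvu huw, u, hvu, huw.symm⟩
  rw [hcircle, card_biUnion]
  · refine sum_congr rfl fun u hu => ?_
    rw [card_erase_of_mem (by simpa [adj_comm] using hu), card_neighborFinset_eq_degree]
  · intro u₁ hu₁ u₂ hu₂ hne
    simp only [Function.onFun, Finset.disjoint_left, mem_erase, mem_neighborFinset]
    rintro w ⟨hwv, hu₁w⟩ ⟨-, hu₂w⟩
    exact hne (h₄ (by simpa using hu₁) (by simpa using hu₂) hu₁w hu₂w (Ne.symm hwv))

end SimpleGraph

open SimpleGraph in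
/-- If the ego subgraph `E₂(v)` of radius 2 centered at `v` (the subgraph of `G`
induced on the disk `D₂(v)` of vertices reachable from `v` at distance at most 2) is a tree,
then `s₂(v) = ŝ(v)`, where `s₂(v) = |{u : d(v,u) = 2}|` and `ŝ(v) = Σ_{u ∈ N(v)} (deg(u) − 1)`. -/
theorem ndf_ego_tree_s2_eq_shat {V : Type*} [Fintype V] [DecidableEq V]
    (G : SimpleGraph V) [DecidableRel G.Adj] (v : V)
    (h : (G.induce {u : V | G.Reachable v u ∧ G.dist v u ≤ 2}).IsTree) :
    (univ.filter (fun u => G.dist v u = 2)).card =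
      ∑ u ∈ G.neighborFinset v, (G.degree u - 1) := by
  set S : Set V := {u : V | G.Reachable v u ∧ G.dist v u ≤ 2}
  have hE := h.isAcyclic
  have mem {w : V} (p : G.Walk v w) (hp : p.length ≤ 2) : w ∈ S :=
    ⟨p.reachable, (dist_le p).trans hp⟩
  have hv : v ∈ S := mem .nil (by simp)
  have hN {u : V} (hvu : G.Adj v u) : u ∈ S := mem hvu.toWalk (by simp)
  refine card_filter_dist_eq_two v (fun u w hvu huw hvw => ?_)
    (fun u₁ u₂ w hvu₁ hvu₂ hu₁w hu₂w hvw => ?_)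
  · exact hE.not_adj_of_adj_of_adj (a := ⟨v, hv⟩) (b := ⟨u, hN hvu⟩) (c := ⟨w, hN hvw⟩)
      hvu huw hvw
  · have hw : w ∈ S := mem (.cons hvu₁ hu₁w.toWalk) (by simp)
    have := hE.eq_of_adj_of_adj (a := ⟨v, hv⟩) (b₁ := ⟨u₁, hN hvu₁⟩) (b₂ := ⟨u₂, hN hvu₂⟩)
      (c := ⟨w, hw⟩) (by simpa using hvw) hvu₁ hu₁w hvu₂ hu₂w
    simpa using this
end

section
/- Let G be a finite simple graph, v a vertex of G, and let E₂′(v) be the graph obtained from the ego subgraph E₂(v) (the subgraph induced on the disk D₂(v)) by deleting every edge both of whose endpoints lie in the circle C₂(v). Then s₂(v) = ŝ(v) if and only if E₂′(v) is a tree, where s₂(v) = |C₂(v)| and ŝ(v) = Σ_{u ∈ N(v)} (deg(u) − 1). -/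
open Finset

/-- The graph `E₂′(v)`: the subgraph of `G` induced on the disk `D₂(v)` (vertices reachable
from `v` at distance at most 2), with every edge whose both endpoints lie in the circle
`C₂(v)` deleted. -/
def egoTwoPrime {V : Type*} (G : SimpleGraph V) (v : V) :
    SimpleGraph {u : V // G.Reachable v u ∧ G.dist v u ≤ 2} where
  Adj a b := G.Adj a b ∧ ¬(G.dist v a = 2 ∧ G.dist v b = 2)
  symm := ⟨by
    rintro a b ⟨h1, h2⟩
    exact ⟨h1.symm, fun ⟨x, y⟩ => h2 ⟨y, x⟩⟩⟩
  loopless := ⟨fun a h => G.loopless.irrefl a h.1⟩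

/-!
Every vertex of `C₂(v)` is adjacent to some vertex of `C₁(v)`, so `E₂′(v)` is connected; it has
`1 + s₁ + s₂` vertices, hence is a tree iff it has `s₁ + s₂` edges. Its degrees are `s₁` at `v`,
`deg u` at `u ∈ C₁(v)` and `t(w) = |N(w) ∩ C₁(v)|` at `w ∈ C₂(v)`, so with `T = Σ_{w ∈ C₂(v)} t(w)`
the handshake lemma gives `2|E| = s₁ + (ŝ + s₁) + T`. Each `t(w) ≥ 1`, and double counting the
edges between `C₁(v)` and `C₂(v)` gives `T ≤ ŝ`; so `s₂ ≤ T ≤ ŝ`, and `E₂′(v)` is a tree iff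
`ŝ + T = 2 s₂` iff `s₂ = ŝ`.
-/

namespace SimpleGraph

variable {V : Type*} {G : SimpleGraph V} {u v w : V}

lemma exists_adj_adj_of_dist_eq_two (h : G.dist u v = 2) : ∃ w, G.Adj u w ∧ G.Adj w v := by
  obtain ⟨p, hp⟩ := G.exists_walk_of_dist_ne_zero (h ▸ two_ne_zero)
  rw [h] at hp
  match p, hp with
  | .cons h₁ (.cons h₂ .nil), _ => exact ⟨_, h₁, h₂⟩

lemma dist_le_two_of_adj_of_adj (huw : G.Adj u w) (hwv : G.Adj w v) : G.dist u v ≤ 2 :=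
  dist_le (.cons huw (.cons hwv .nil))

lemma reachable_and_dist_le_two_iff :
    G.Reachable v u ∧ G.dist v u ≤ 2 ↔ u = v ∨ G.Adj v u ∨ G.dist v u = 2 := by
  rw [← dist_eq_one_iff_adj]
  constructor
  · rintro ⟨hr, hd⟩
    obtain h | h | h : G.dist v u = 0 ∨ G.dist v u = 1 ∨ G.dist v u = 2 := by omega
    · exact .inl (hr.dist_eq_zero_iff.mp h).symm
    · exact .inr (.inl h)
    · exact .inr (.inr h)
  · rintro (rfl | h | h)
    · simp
    · exact ⟨Reachable.of_dist_ne_zero (by omega), by omega⟩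
    · exact ⟨Reachable.of_dist_ne_zero (by omega), by omega⟩

lemma card_neighborSet_eq_card_of_adj_iff {p : V → Prop} (H : SimpleGraph {x // p x})
    (a : {x // p x}) (s : Finset V) (hs : ∀ x ∈ s, p x)
    (hadj : ∀ x (hx : p x), H.Adj a ⟨x, hx⟩ ↔ x ∈ s) :
    Nat.card (H.neighborSet a) = #s := by
  rw [← Nat.card_eq_finsetCard]
  refine Nat.card_congr
    { toFun b := ⟨b.1.1, (hadj _ _).mp b.2⟩
      invFun x := ⟨⟨x.1, hs _ x.2⟩, (hadj _ _).mpr x.2⟩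
      left_inv _ := rfl
      right_inv _ := rfl }

section Finite

variable [Fintype V] [DecidableRel G.Adj]

lemma sum_degree_neighborFinset (v : V) :
    ∑ u ∈ G.neighborFinset v, G.degree u =
      ∑ u ∈ G.neighborFinset v, (G.degree u - 1) + #(G.neighborFinset v) := by
  have hpos : ∀ u ∈ G.neighborFinset v, 1 ≤ G.degree u := fun u hu =>
    (G.degree_pos_iff_exists_adj u).mpr ⟨v, ((mem_neighborFinset _ _ _).mp hu).symm⟩
  rw [sum_tsub_distrib _ hpos, card_eq_sum_ones,
    Nat.sub_add_cancel (sum_le_sum hpos)]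

lemma card_filter_dist_eq_two_le_sum (v : V) :
    #{w | G.dist v w = 2} ≤ ∑ w with G.dist v w = 2, #{u ∈ G.neighborFinset v | G.Adj u w} := by
  have hpos : ∀ w ∈ ({w | G.dist v w = 2} : Finset V),
      1 ≤ #{u ∈ G.neighborFinset v | G.Adj u w} := fun w hw => card_pos.mpr <| by
    obtain ⟨u, hvu, huw⟩ := exists_adj_adj_of_dist_eq_two (mem_filter.mp hw).2
    exact ⟨u, mem_filter.mpr ⟨(mem_neighborFinset _ _ _).mpr hvu, huw⟩⟩
  simpa using card_nsmul_le_sum _ _ 1 hpos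

lemma sum_card_neighborFinset_filter_adj_le {v : V} {t : Finset V} (hvt : v ∉ t) :
    ∑ w ∈ t, #{u ∈ G.neighborFinset v | G.Adj u w} ≤
      ∑ u ∈ G.neighborFinset v, (G.degree u - 1) := by
  classical
  calc ∑ w ∈ t, #{u ∈ G.neighborFinset v | G.Adj u w}
      = ∑ u ∈ G.neighborFinset v, #{w ∈ t | G.Adj u w} :=
        (sum_card_bipartiteAbove_eq_sum_card_bipartiteBelow G.Adj).symm
    _ ≤ _ := sum_le_sum fun u hu => ?_
  have hvu : v ∈ G.neighborFinset u := (mem_neighborFinset _ _ _).mpr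
    ((mem_neighborFinset _ _ _).mp hu).symm
  rw [← card_neighborFinset_eq_degree, ← card_erase_of_mem hvu]
  refine card_le_card fun w hw => ?_
  obtain ⟨hwt, huw⟩ := mem_filter.mp hw
  exact mem_erase.mpr ⟨ne_of_mem_of_not_mem hwt hvt, (mem_neighborFinset _ _ _).mpr huw⟩

end Finite

end SimpleGraph

open SimpleGraph

section egoTwoPrime

variable {V : Type*} {G : SimpleGraph V} {v : V}

lemma egoTwoPrime_connected : (egoTwoPrime G v).Connected := by
  let c : {u : V // G.Reachable v u ∧ G.dist v u ≤ 2} := ⟨v, .refl v, by simp⟩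
  have hc : c.1 = v := rfl
  have adj_center {a} (h : G.Adj v a.1) : (egoTwoPrime G v).Adj c a := ⟨h, by simp [hc]⟩
  have hreach a : (egoTwoPrime G v).Reachable c a := by
    obtain h | h | h := reachable_and_dist_le_two_iff.mp a.2
    · rw [show a = c from Subtype.ext h]
    · exact (adj_center h).reachable
    · obtain ⟨w, hvw, hwa⟩ := exists_adj_adj_of_dist_eq_two h
      let b : {u : V // G.Reachable v u ∧ G.dist v u ≤ 2} :=
        ⟨w, reachable_and_dist_le_two_iff.mpr (.inr (.inl hvw))⟩
      have hba : (egoTwoPrime G v).Adj b a := ⟨hwa, by simp [b, dist_eq_one_iff_adj.mpr hvw]⟩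
      exact (adj_center (a := b) hvw).reachable.trans hba.reachable
  have : Nonempty {u : V // G.Reachable v u ∧ G.dist v u ≤ 2} := ⟨c⟩
  exact .mk fun a b => (hreach a).symm.trans (hreach b)

section Finite

variable [Fintype V] [DecidableRel G.Adj]

lemma mem_insert_neighborFinset_union_iff [DecidableEq V] {u : V} :
    u ∈ insert v (G.neighborFinset v ∪ ({u | G.dist v u = 2} : Finset V)) ↔
      G.Reachable v u ∧ G.dist v u ≤ 2 := by
  simp [reachable_and_dist_le_two_iff]

lemma self_notMem_neighborFinset_union [DecidableEq V] :
    v ∉ G.neighborFinset v ∪ ({u | G.dist v u = 2} : Finset V) := by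
  simp

lemma disjoint_neighborFinset_filter_dist_eq_two :
    Disjoint (G.neighborFinset v) ({u | G.dist v u = 2} : Finset V) := by
  simp +contextual [Finset.disjoint_left, ← dist_eq_one_iff_adj]

lemma card_egoTwoPrime_vertices :
    Nat.card {u : V // G.Reachable v u ∧ G.dist v u ≤ 2} =
      #(G.neighborFinset v) + #{u | G.dist v u = 2} + 1 := by
  classical
  rw [Nat.card_eq_fintype_card, Fintype.card_of_subtype _ fun _ =>
      mem_insert_neighborFinset_union_iff, card_insert_of_notMem self_notMem_neighborFinset_union,
    card_union_of_disjoint disjoint_neighborFinset_filter_dist_eq_two]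

lemma egoTwoPrime_isTree_iff :
    (egoTwoPrime G v).IsTree ↔
      Nat.card (egoTwoPrime G v).edgeSet = #(G.neighborFinset v) + #{u | G.dist v u = 2} := by
  rw [isTree_iff_connected_and_card, card_egoTwoPrime_vertices]
  simp [egoTwoPrime_connected]

lemma card_neighborSet_egoTwoPrime (a : {u : V // G.Reachable v u ∧ G.dist v u ≤ 2}) :
    Nat.card ((egoTwoPrime G v).neighborSet a) =
      if G.dist v a = 2 then #{u ∈ G.neighborFinset v | G.Adj u a} else G.degree a := by
  split_ifs with ha
  · refine card_neighborSet_eq_card_of_adj_iff _ _ _ (fun x hx => ?_) fun x hx => ?_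
    · simp only [mem_filter, mem_neighborFinset] at hx
      exact reachable_and_dist_le_two_iff.mpr (.inr (.inl hx.1))
    · simp only [egoTwoPrime, mem_filter, mem_neighborFinset, ha, true_and]
      refine ⟨fun ⟨hax, hx2⟩ => ?_,
        fun ⟨hvx, hxa⟩ => ⟨hxa.symm, by simp [dist_eq_one_iff_adj.mpr hvx]⟩⟩
      obtain rfl | hvx | hx2' := reachable_and_dist_le_two_iff.mp hx
      · simp [dist_eq_one_iff_adj.mpr hax.symm] at ha
      · exact ⟨hvx, hax.symm⟩
      · exact absurd hx2' hx2
  · rw [← card_neighborFinset_eq_degree]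
    refine card_neighborSet_eq_card_of_adj_iff _ _ _ (fun x hx => ?_) fun x hx => ?_
    · rw [mem_neighborFinset] at hx
      obtain ha' | hva | ha' := reachable_and_dist_le_two_iff.mp a.2
      · exact reachable_and_dist_le_two_iff.mpr (.inr (.inl (ha' ▸ hx)))
      · exact ⟨hva.reachable.trans hx.reachable, dist_le_two_of_adj_of_adj hva hx⟩
      · exact absurd ha' ha
    · simp [egoTwoPrime, ha]

lemma two_mul_card_edgeSet_egoTwoPrime :
    2 * Nat.card (egoTwoPrime G v).edgeSet =
      #(G.neighborFinset v) + ∑ u ∈ G.neighborFinset v, G.degree u +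
        ∑ w with G.dist v w = 2, #{u ∈ G.neighborFinset v | G.Adj u w} := by
  classical
  let f (x : V) := if G.dist v x = 2 then #{u ∈ G.neighborFinset v | G.Adj u x} else G.degree x
  have hsum : ∑ a, (egoTwoPrime G v).degree a =
      ∑ a : {u : V // G.Reachable v u ∧ G.dist v u ≤ 2}, f a := by
    refine sum_congr rfl fun a _ => ?_
    rw [← card_neighborSet_eq_degree, ← Nat.card_eq_fintype_card, card_neighborSet_egoTwoPrime]
  rw [Nat.card_eq_fintype_card, ← edgeFinset_card, ← sum_degrees_eq_twice_card_edges, hsum,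
    ← sum_subtype _ (fun _ => mem_insert_neighborFinset_union_iff) f,
    sum_insert self_notMem_neighborFinset_union,
    sum_union disjoint_neighborFinset_filter_dist_eq_two, add_assoc]
  congr 1
  · simp [f, card_neighborFinset_eq_degree]
  congr 1
  · refine sum_congr rfl fun u hu => ?_
    simp [f, dist_eq_one_iff_adj.mpr ((mem_neighborFinset _ _ _).mp hu)]
  · refine sum_congr rfl fun w hw => ?_
    simp [f, (mem_filter.mp hw).2]

end Finite

end egoTwoPrime

theorem ndf_s2_eq_shat_iff_egoPrime_tree_general {V : Type*} [Fintype V]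
    (G : SimpleGraph V) [DecidableRel G.Adj] (v : V) :
    (univ.filter (fun u => G.dist v u = 2)).card =
      ∑ u ∈ G.neighborFinset v, (G.degree u - 1) ↔
    (egoTwoPrime G v).IsTree := by
  have hedges := two_mul_card_edgeSet_egoTwoPrime (G := G) (v := v)
  have hdeg := G.sum_degree_neighborFinset v
  have hlower := G.card_filter_dist_eq_two_le_sum v
  have hupper := G.sum_card_neighborFinset_filter_adj_le (v := v) (t := {w | G.dist v w = 2})
    (by simp)
  rw [egoTwoPrime_isTree_iff]
  omega

/-- `s₂(v) = ŝ(v)` if and only if `E₂′(v)` is a tree, where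
`s₂(v) = |C₂(v)|` and `ŝ(v) = Σ_{u ∈ N(v)} (deg(u) − 1)`. -/
theorem ndf_s2_eq_shat_iff_egoPrime_tree {V : Type*} [Fintype V] [DecidableEq V]
    (G : SimpleGraph V) [DecidableRel G.Adj] (v : V) :
    (univ.filter (fun u => G.dist v u = 2)).card =
      ∑ u ∈ G.neighborFinset v, (G.degree u - 1) ↔
    (egoTwoPrime G v).IsTree :=
  ndf_s2_eq_shat_iff_egoPrime_tree_general G v
end
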